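/- arXiv:1708.07346 — 2 statements merged into one kernel-verified Lean document; each statement's English description precedes it below -/
import Mathlib

section
/- Let X be a Hausdorff topological space, x ∈ X, and n ≥ 1. Let 𝒦 be the collection of all compact subsets of X containing x, directed by inclusion. Suppose G is a group and for each K ∈ 𝒦 a group homomorphism p_K : π_n(K,x) → G is given such that p_K = p_{K'} ∘ (ι_{KK'})_* whenever K ⊆ K' in 𝒦, where ι_{KK'} : K → K' is the inclusion. Then there exists a unique group homomorphism σ : π_n(X,x) → G such that σ ∘ (ι_K)_* = p_K for every K ∈ 𝒦, where ι_K : K → X is the inclusion. (That is, π_n(X,x) together with the inclusion-induced homomorphisms (ι_K)_* is the direct limit of the direct system of groups {π_n(K,x)}_{K ∈ 𝒦}.) -/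
open unitInterval Topology Topology.Homotopy

/-- The map induced on `N`-th homotopy groups (sets of homotopy classes rel the cube
boundary) by a continuous basepoint-preserving map `h : (A, a) → (B, b)`, given by
composing representatives with `h`. -/
def HomotopyGroup.map (N : Type*) {A B : Type*} [TopologicalSpace A] [TopologicalSpace B]
    {a : A} {b : B} (h : C(A, B)) (hb : h a = b) :
    HomotopyGroup N A a → HomotopyGroup N B b :=
  Quotient.map
    (fun p => ⟨h.comp p.1, fun y hy => by
      simp only [ContinuousMap.comp_apply, p.2 y hy, hb]⟩)
    (fun p q hpq => hpq.map fun F => F.compContinuousMap h)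

/-!
A homotopy class in `X` is represented by a generalized loop `p`, whose image is compact, and
the class of `p` is the image of the class of `p` corestricted to any compact `K ⊇ range p`.
Compatibility of the family `P` makes the value `P K ⟦p|K⟧` independent of `K`, and of the
representative `p`, since a homotopy between two representatives has compact image too.
Multiplicativity follows because the maps induced by the inclusions `K → X` are homomorphisms,
and uniqueness because every class comes from some compact `K`.
-/

namespace GenLoop

variable {N X Y : Type*} [TopologicalSpace X] [TopologicalSpace Y] {x : X} {y : Y}

def map (h : C(X, Y)) (hy : h x = y) (p : Ω^ N X x) : Ω^ N Y y :=
  ⟨h.comp p.1, fun t ht => by simp only [ContinuousMap.comp_apply, p.2 t ht, hy]⟩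

theorem map_transAt [DecidableEq N] (h : C(X, Y)) (hy : h x = y) (i : N) (f g : Ω^ N X x) :
    map h hy (transAt i f g) = transAt i (map h hy f) (map h hy g) :=
  GenLoop.ext _ _ fun t => (apply_ite h _ _ _ : h (transAt i f g t) = _)

def codRestrict (p : Ω^ N X x) {K : Set X} (h : Set.range p ⊆ K) (hx : x ∈ K) :
    Ω^ N K ⟨x, hx⟩ :=
  ⟨⟨fun t => ⟨p t, h (Set.mem_range_self t)⟩, p.1.continuous.subtype_mk _⟩,
    fun t ht => Subtype.ext (p.2 t ht)⟩

theorem map_val_codRestrict (p : Ω^ N X x) {K : Set X} (h : Set.range p ⊆ K) (hx : x ∈ K) :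
    map ⟨Subtype.val, continuous_subtype_val⟩ rfl (codRestrict p h hx) = p :=
  GenLoop.ext _ _ fun _ => rfl

theorem codRestrict_map_val {K : Set X} (hx : x ∈ K) (p : Ω^ N K ⟨x, hx⟩)
    (h : Set.range (map ⟨Subtype.val, continuous_subtype_val⟩ rfl p) ⊆ K) :
    codRestrict (map ⟨Subtype.val, continuous_subtype_val⟩ rfl p) h hx = p :=
  GenLoop.ext _ _ fun _ => rfl

theorem range_map_val_subset {K : Set X} (hx : x ∈ K) (p : Ω^ N K ⟨x, hx⟩) :
    Set.range (map ⟨Subtype.val, continuous_subtype_val⟩ rfl p) ⊆ K := by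
  rintro _ ⟨t, rfl⟩
  exact (p t).2

theorem map_inclusion_codRestrict (p : Ω^ N X x) {K K' : Set X} (hKK' : K ⊆ K')
    (h : Set.range p ⊆ K) (hx : x ∈ K) (hx' : x ∈ K') :
    map ⟨Set.inclusion hKK', continuous_inclusion hKK'⟩ rfl (codRestrict p h hx) =
      codRestrict p (h.trans hKK') hx' :=
  GenLoop.ext _ _ fun _ => rfl

theorem isCompact_range (p : Ω^ N X x) : IsCompact (Set.range p) :=
  _root_.isCompact_range p.1.continuous

theorem basepoint_mem_range [Nonempty N] (p : Ω^ N X x) : x ∈ Set.range p :=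
  ⟨fun _ => 0, GenLoop.boundary p _ ⟨Classical.arbitrary N, Or.inl rfl⟩⟩

theorem Homotopic.exists_isCompact_codRestrict {p q : Ω^ N X x} (hpq : Homotopic p q) :
    ∃ K : Set X, IsCompact K ∧
      ∃ (hp : Set.range p ⊆ K) (hq : Set.range q ⊆ K) (hx : x ∈ K),
      Homotopic (codRestrict p hp hx) (codRestrict q hq hx) := by
  obtain ⟨H⟩ := hpq
  -- `range H` misses the basepoint when `N` is empty.
  have hH : Set.range H ⊆ insert x (Set.range H) := Set.subset_insert _ _
  have hp : Set.range p ⊆ insert x (Set.range H) := by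
    rintro _ ⟨t, rfl⟩
    exact hH ⟨(0, t), H.apply_zero t⟩
  have hq : Set.range q ⊆ insert x (Set.range H) := by
    rintro _ ⟨t, rfl⟩
    exact hH ⟨(1, t), H.apply_one t⟩
  refine ⟨_, (_root_.isCompact_range H.continuous).insert x, hp, hq, Set.mem_insert x _,
    ⟨?_⟩⟩
  exact
    { toFun := fun z => ⟨H z, hH (Set.mem_range_self z)⟩
      continuous_toFun := H.continuous.subtype_mk _
      map_zero_left := fun t => Subtype.ext (H.apply_zero t)
      map_one_left := fun t => Subtype.ext (H.apply_one t)
      prop' := fun s t ht => Subtype.ext (H.prop' s t ht) }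

end GenLoop

namespace HomotopyGroup

variable {N X Y : Type*} [TopologicalSpace X] [TopologicalSpace Y] {x : X} {y : Y}

def mk (p : Ω^ N X x) : HomotopyGroup N X x :=
  ⟦p⟧

@[elab_as_elim]
theorem induction_on {motive : HomotopyGroup N X x → Prop} (a : HomotopyGroup N X x)
    (h : ∀ p, motive (mk p)) : motive a :=
  Quotient.inductionOn a h

theorem mk_eq_mk_of_homotopic {p q : Ω^ N X x} (h : GenLoop.Homotopic p q) : mk p = mk q :=
  Quotient.sound h

theorem mk_mul_mk [DecidableEq N] [Nonempty N] (i : N) (p q : Ω^ N X x) :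
    mk p * mk q = mk (GenLoop.transAt i q p) :=
  mul_spec

theorem map_mk (h : C(X, Y)) (hy : h x = y) (p : Ω^ N X x) :
    map N h hy (mk p) = mk (GenLoop.map h hy p) :=
  rfl

theorem map_mul [DecidableEq N] [Nonempty N] (h : C(X, Y)) (hy : h x = y)
    (a b : HomotopyGroup N X x) : map N h hy (a * b) = map N h hy a * map N h hy b := by
  obtain ⟨i⟩ := ‹Nonempty N›
  induction a using induction_on with | h p =>
  induction b using induction_on with | h q =>
  rw [mk_mul_mk i, map_mk, map_mk, map_mk, mk_mul_mk i, GenLoop.map_transAt]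

theorem mk_eq_map_val_codRestrict (p : Ω^ N X x) {K : Set X} (h : Set.range p ⊆ K)
    (hx : x ∈ K) :
    mk p =
      map N ⟨Subtype.val, continuous_subtype_val⟩ rfl (mk (GenLoop.codRestrict p h hx)) := by
  rw [map_mk, GenLoop.map_val_codRestrict]

end HomotopyGroup

namespace HomotopyGroup

open GenLoop

variable {N X G : Type*} [TopologicalSpace X] {x : X}

def IsCompatibleOnCompacts
    (P : ∀ K : Set X, IsCompact K → ∀ hx : x ∈ K, HomotopyGroup N K ⟨x, hx⟩ → G) :
    Prop :=
  ∀ (K K' : Set X) (hK : IsCompact K) (hK' : IsCompact K') (hx : x ∈ K) (hx' : x ∈ K')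
    (hKK' : K ⊆ K') (β : HomotopyGroup N K ⟨x, hx⟩),
    P K' hK' hx' (HomotopyGroup.map N ⟨Set.inclusion hKK', continuous_inclusion hKK'⟩ rfl β) =
      P K hK hx β

variable [Nonempty N]
  (P : ∀ K : Set X, IsCompact K → ∀ hx : x ∈ K, HomotopyGroup N K ⟨x, hx⟩ → G)

def liftOnRange (p : Ω^ N X x) : G :=
  P _ (isCompact_range p) (basepoint_mem_range p) (mk (codRestrict p subset_rfl _))

variable {P}

theorem liftOnRange_eq (hP : IsCompatibleOnCompacts P) (p : Ω^ N X x) {K : Set X}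
    (hK : IsCompact K) (hx : x ∈ K) (h : Set.range p ⊆ K) :
    liftOnRange P p = P K hK hx (mk (codRestrict p h hx)) := by
  rw [liftOnRange, ← hP _ K _ hK _ hx h, map_mk, map_inclusion_codRestrict]

theorem liftOnRange_eq_of_homotopic (hP : IsCompatibleOnCompacts P) {p q : Ω^ N X x}
    (hpq : Homotopic p q) : liftOnRange P p = liftOnRange P q := by
  obtain ⟨K, hK, hp, hq, hx, hpqK⟩ := hpq.exists_isCompact_codRestrict
  rw [liftOnRange_eq hP p hK hx hp, liftOnRange_eq hP q hK hx hq, mk_eq_mk_of_homotopic hpqK]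

def liftOfCompacts (hP : IsCompatibleOnCompacts P) : HomotopyGroup N X x → G :=
  Quotient.lift (liftOnRange P) fun _ _ => liftOnRange_eq_of_homotopic hP

theorem liftOfCompacts_mk (hP : IsCompatibleOnCompacts P) (p : Ω^ N X x) :
    liftOfCompacts hP (mk p) = liftOnRange P p :=
  rfl

theorem liftOfCompacts_map_val (hP : IsCompatibleOnCompacts P) (K : Set X) (hK : IsCompact K)
    (hx : x ∈ K) (β : HomotopyGroup N K ⟨x, hx⟩) :
    liftOfCompacts hP (HomotopyGroup.map N ⟨Subtype.val, continuous_subtype_val⟩ rfl β) =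
      P K hK hx β := by
  induction β using induction_on with | h p =>
  rw [map_mk, liftOfCompacts_mk, liftOnRange_eq hP _ hK hx (range_map_val_subset hx p),
    codRestrict_map_val]

theorem eq_liftOfCompacts (hP : IsCompatibleOnCompacts P) (f : HomotopyGroup N X x → G)
    (hf : ∀ (K : Set X) (hK : IsCompact K) (hx : x ∈ K) (β : HomotopyGroup N K ⟨x, hx⟩),
      f (HomotopyGroup.map N ⟨Subtype.val, continuous_subtype_val⟩ rfl β) = P K hK hx β) :
    f = liftOfCompacts hP := by
  funext α
  induction α using induction_on with | h p =>
  rw [mk_eq_map_val_codRestrict p subset_rfl (basepoint_mem_range p),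
    hf _ (isCompact_range p), liftOfCompacts_map_val]

theorem liftOfCompacts_mul [DecidableEq N] [Mul G] (hP : IsCompatibleOnCompacts P)
    (hmul : ∀ (K : Set X) (hK : IsCompact K) (hx : x ∈ K)
      (β γ : HomotopyGroup N K ⟨x, hx⟩),
      P K hK hx (β * γ) = P K hK hx β * P K hK hx γ)
    (a b : HomotopyGroup N X x) :
    liftOfCompacts hP (a * b) = liftOfCompacts hP a * liftOfCompacts hP b := by
  induction a using induction_on with | h p =>
  induction b using induction_on with | h q =>
  have hK : IsCompact (Set.range p ∪ Set.range q) := (isCompact_range p).union (isCompact_range q)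
  have hx : x ∈ Set.range p ∪ Set.range q := Or.inl (basepoint_mem_range p)
  rw [mk_eq_map_val_codRestrict p Set.subset_union_left hx,
    mk_eq_map_val_codRestrict q Set.subset_union_right hx, ← HomotopyGroup.map_mul,
    liftOfCompacts_map_val hP _ hK, liftOfCompacts_map_val hP _ hK,
    liftOfCompacts_map_val hP _ hK, hmul]

end HomotopyGroup

theorem statement7_general {X : Type*} [TopologicalSpace X] (x : X) (n : ℕ)
    (G : Type*) [Group G]
    (P : ∀ K : Set X, IsCompact K → ∀ hx : x ∈ K,
      HomotopyGroup (Fin (n + 1)) K ⟨x, hx⟩ →* G)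
    (hP : ∀ (K K' : Set X) (hK : IsCompact K) (hK' : IsCompact K')
      (hx : x ∈ K) (hx' : x ∈ K') (hKK' : K ⊆ K')
      (β : HomotopyGroup (Fin (n + 1)) K ⟨x, hx⟩),
      P K' hK' hx' (HomotopyGroup.map (Fin (n + 1))
        (⟨Set.inclusion hKK', continuous_inclusion hKK'⟩ : C(K, K')) rfl β) =
      P K hK hx β) :
    ∃! sig : HomotopyGroup (Fin (n + 1)) X x →* G,
      ∀ (K : Set X) (hK : IsCompact K) (hx : x ∈ K)
        (β : HomotopyGroup (Fin (n + 1)) K ⟨x, hx⟩),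
        sig (HomotopyGroup.map (Fin (n + 1))
          (⟨Subtype.val, continuous_subtype_val⟩ : C(K, X)) rfl β) = P K hK hx β := by
  have hP' : HomotopyGroup.IsCompatibleOnCompacts fun K hK hx => ⇑(P K hK hx) := hP
  refine ⟨MonoidHom.mk' (HomotopyGroup.liftOfCompacts hP')
      (HomotopyGroup.liftOfCompacts_mul hP' fun K hK hx => map_mul (P K hK hx)),
    HomotopyGroup.liftOfCompacts_map_val hP', fun sig hsig => ?_⟩
  exact DFunLike.coe_injective (HomotopyGroup.eq_liftOfCompacts hP' sig hsig)

/-- Let `X` be Hausdorff, `x ∈ X` and `n ≥ 1` (here `n + 1` with `n : ℕ`).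
Given a group `G` and, for each compact `K ⊆ X` with `x ∈ K`, a homomorphism
`P K : π_n(K, x) →* G` compatible with the maps induced by inclusions `K → K'`, there is
a unique homomorphism `σ : π_n(X, x) →* G` with `σ ∘ (ι_K)_* = P K` for all such `K`;
i.e. `π_n(X, x)` with the inclusion-induced maps is the direct limit of the direct system
of the groups `π_n(K, x)` over the compact subsets of `X` containing `x`. -/
theorem statement7 {X : Type*} [TopologicalSpace X] [T2Space X] (x : X) (n : ℕ)
    (G : Type*) [Group G]
    (P : ∀ K : Set X, IsCompact K → ∀ hx : x ∈ K,
      HomotopyGroup (Fin (n + 1)) K ⟨x, hx⟩ →* G)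
    (hP : ∀ (K K' : Set X) (hK : IsCompact K) (hK' : IsCompact K')
      (hx : x ∈ K) (hx' : x ∈ K') (hKK' : K ⊆ K')
      (β : HomotopyGroup (Fin (n + 1)) K ⟨x, hx⟩),
      P K' hK' hx' (HomotopyGroup.map (Fin (n + 1))
        (⟨Set.inclusion hKK', continuous_inclusion hKK'⟩ : C(K, K')) rfl β) =
      P K hK hx β) :
    ∃! sig : HomotopyGroup (Fin (n + 1)) X x →* G,
      ∀ (K : Set X) (hK : IsCompact K) (hx : x ∈ K)
        (β : HomotopyGroup (Fin (n + 1)) K ⟨x, hx⟩),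
        sig (HomotopyGroup.map (Fin (n + 1))
          (⟨Subtype.val, continuous_subtype_val⟩ : C(K, X)) rfl β) = P K hK hx β :=
  statement7_general x n G P hP
end

section
/- Let X be a Hausdorff topological space, X₀ ⊆ X a subset, and W ⊆ X an open subset with closure(W) ⊆ interior(X₀). Then for every compact subset K ⊆ X and every compact subset K₀ with K₀ ⊆ K and K₀ ⊆ X₀, there exists a compact subset K₀' of X such that K₀ ⊆ K₀' ⊆ K, K₀' ⊆ X₀, and K ∩ closure(W) ⊆ int_K K₀', where int_K K₀' denotes the interior of K₀' in the subspace topology of K. (In particular, the set of compact pairs (K,K₀) with K ∩ closure(W) contained in the K-relative interior of K₀ is cofinal among all compact pairs (K,K₀) with K₀ ⊆ K and K₀ ⊆ X₀, ordered by componentwise inclusion.) -/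
/-- Let `X` be Hausdorff, `X₀ ⊆ X`, and `W ⊆ X` open with
`closure W ⊆ interior X₀`.  Then for all compact `K ⊆ X` and compact `K₀` with
`K₀ ⊆ K` and `K₀ ⊆ X₀`, there is a compact `K₀'` with `K₀ ⊆ K₀' ⊆ K`, `K₀' ⊆ X₀`, and
`K ∩ closure W` contained in the interior of `K₀'` relative to the subspace topology of
`K` (so the pairs `(K, K₀)` with `K ∩ closure W ⊆ int_K K₀` are cofinal among compact
pairs). -/
theorem statement8 {X : Type*} [TopologicalSpace X] [T2Space X]
    (X₀ W : Set X) (hW : IsOpen W) (hWX₀ : closure W ⊆ interior X₀)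
    (K K₀ : Set X) (hK : IsCompact K) (hK₀ : IsCompact K₀)
    (hK₀K : K₀ ⊆ K) (hK₀X₀ : K₀ ⊆ X₀) :
    ∃ K₀' : Set X, IsCompact K₀' ∧ K₀ ⊆ K₀' ∧ K₀' ⊆ K ∧ K₀' ⊆ X₀ ∧
      (Subtype.val ⁻¹' closure W : Set K) ⊆
        interior (Subtype.val ⁻¹' K₀' : Set K) := by
  haveI : CompactSpace K := isCompact_iff_compactSpace.mp hK
  set A : Set K := Subtype.val ⁻¹' closure W with hA
  have hAclosed : IsClosed A := isClosed_closure.preimage continuous_subtype_val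
  have hTopen : IsOpen (Subtype.val ⁻¹' interior X₀ : Set K) :=
    isOpen_interior.preimage continuous_subtype_val
  have hAT : A ⊆ (Subtype.val ⁻¹' interior X₀ : Set K) := fun x hx => hWX₀ hx
  obtain ⟨u, hu_open, hAu, hclu⟩ := normal_exists_closure_subset hAclosed hTopen hAT
  refine ⟨K₀ ∪ Subtype.val '' closure u, ?_, ?_, ?_, ?_, ?_⟩
  · exact hK₀.union ((isClosed_closure.isCompact).image continuous_subtype_val)
  · exact Set.subset_union_left
  · refine Set.union_subset hK₀K ?_
    exact fun x ⟨y, _, hy⟩ => hy ▸ y.2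
  · refine Set.union_subset hK₀X₀ ?_
    rintro x ⟨y, hy, rfl⟩
    exact interior_subset (hclu hy)
  · refine Set.Subset.trans hAu (interior_maximal ?_ hu_open)
    intro x hx
    exact Or.inr ⟨x, subset_closure hx, rfl⟩
end
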